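/- Let X be uniform Bernoulli(1/2), Y its erasure with erasure probability p ∈ (0,1) (erasure event independent of all else), N₂ ~ Bernoulli(D₂/p), N₁ ~ Bernoulli(α) independent of each other and of (X,Y), W₂ = X ⊕ N₂, W₁ = W₂ ⊕ N₁, where D₂/p ≤ 1/2, α ∈ [0,1/2], and (D₂/p) ⋆ α = D₁. Then I(X;W₁) + I(X;W₂|Y,W₁) = p(1 − h(D₂/p)) + (1−p)(1 − h(D₁)) and H(Y|W₁) = h(p) + (1−p)·h(D₁). -/

import Mathlib

/-!
The hypotheses determine the joint law of `(Y, X, N₁, N₂)`: `X`, `N₁`, `N₂` are independent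
with laws `Ber(1/2)`, `Ber(α)`, `Ber(D₂/p)`, and `Y` erases `X` on an independent event of
probability `p`. Every quantity in the statement is a combination of the entropies of `X`, `W₁`,
`(X, W₁)`, `(Y, W₁)`, `(X, Y, W₁)`, `(W₂, Y, W₁)` and `(X, W₂, Y, W₁)`, and each of these is the
entropy of an explicit pushforward of that law. The joint laws factor through
`N₂ ⊕ N₁ ~ Ber((D₂/p) ⋆ α) = Ber(D₁)` and the erasure event, so each entropy is a sum of binary
entropies, and both identities are linear combinations of them.
-/

open Finset Real
open scoped Classical

noncomputable section

/-- Probability of an event under a finite probability mass function. -/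
def pr {Ω : Type} [Fintype Ω] (P : Ω → ℝ) (A : Ω → Prop) : ℝ :=
  ∑ ω, if A ω then P ω else 0

/-- `P` is a probability mass function on the finite type `Ω`. -/
def IsPMF {Ω : Type} [Fintype Ω] (P : Ω → ℝ) : Prop :=
  (∀ ω, 0 ≤ P ω) ∧ ∑ ω, P ω = 1

/-- `-t log₂ t` (with the convention `0 log 0 = 0`). -/
def nlog (t : ℝ) : ℝ := - (t * Real.logb 2 t)

/-- Shannon entropy (base 2) of a random variable `X` on `(Ω, P)`. -/
def ent {Ω α : Type} [Fintype Ω] [Fintype α] (P : Ω → ℝ) (X : Ω → α) : ℝ :=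
  ∑ x, nlog (pr P (fun ω => X ω = x))

/-- Conditional Shannon entropy `H(X|Y) = H(X,Y) - H(Y)`. -/
def condEnt {Ω α β : Type} [Fintype Ω] [Fintype α] [Fintype β]
    (P : Ω → ℝ) (X : Ω → α) (Y : Ω → β) : ℝ :=
  ent P (fun ω => (X ω, Y ω)) - ent P Y

/-- Mutual information `I(X;Y) = H(X) - H(X|Y)`. -/
def mi {Ω α β : Type} [Fintype Ω] [Fintype α] [Fintype β]
    (P : Ω → ℝ) (X : Ω → α) (Y : Ω → β) : ℝ :=
  ent P X - condEnt P X Y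

/-- Conditional mutual information `I(X;Y|Z) = H(X|Z) - H(X|Y,Z)`. -/
def condMI {Ω α β γ : Type} [Fintype Ω] [Fintype α] [Fintype β] [Fintype γ]
    (P : Ω → ℝ) (X : Ω → α) (Y : Ω → β) (Z : Ω → γ) : ℝ :=
  condEnt P X Z - condEnt P X (fun ω => (Y ω, Z ω))

/-- Binary entropy function. -/
def binEnt (a : ℝ) : ℝ := nlog a + nlog (1 - a)

def bernoulliMass (a : ℝ) (b : Bool) : ℝ := if b then a else 1 - a

def erasureMass (p : ℝ) (x : Bool) : Option Bool → ℝ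
  | none => p
  | some y => if y = x then 1 - p else 0

/-- The values of `(Y, X, N₁, N₂)`, of which every random variable of the theorem is a function. -/
abbrev Cell := Option Bool × Bool × Bool × Bool

namespace Cell

@[simp] def y (t : Cell) : Option Bool := t.1
@[simp] def x (t : Cell) : Bool := t.2.1
@[simp] def n₁ (t : Cell) : Bool := t.2.2.1
@[simp] def n₂ (t : Cell) : Bool := t.2.2.2
@[simp] def w₂ (t : Cell) : Bool := xor t.x t.n₂
@[simp] def w₁ (t : Cell) : Bool := xor t.w₂ t.n₁

end Cell

def cellMass (p q a : ℝ) (t : Cell) : ℝ :=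
  erasureMass p t.x t.y * (1/2 * bernoulliMass a t.n₁ * bernoulliMass q t.n₂)

@[simp] lemma cellMass_mk (p q a : ℝ) (y : Option Bool) (x n₁ n₂ : Bool) :
    cellMass p q a (y, x, n₁, n₂)
      = erasureMass p x y * (1/2 * bernoulliMass a n₁ * bernoulliMass q n₂) :=
  rfl

def mapMass {τ β : Type} [Fintype τ] (μ : τ → ℝ) (g : τ → β) (b : β) : ℝ :=
  ∑ t, if g t = b then μ t else 0

def massEnt {β : Type} [Fintype β] (μ : β → ℝ) : ℝ := ∑ b, nlog (μ b)

section Probability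

variable {Ω : Type} [Fintype Ω] (P : Ω → ℝ)

lemma pr_congr {A B : Ω → Prop} (h : ∀ ω, A ω ↔ B ω) : pr P A = pr P B :=
  Finset.sum_congr rfl fun ω _ => by simp only [h ω]

lemma pr_false : pr P (fun _ => False) = 0 := by
  simp [pr]

lemma pr_not (hP : IsPMF P) (A : Ω → Prop) : pr P (fun ω => ¬ A ω) = 1 - pr P A := by
  unfold pr
  rw [← hP.2, ← Finset.sum_sub_distrib]
  exact Finset.sum_congr rfl fun ω _ => by by_cases h : A ω <;> simp [h]

lemma pr_eq_pr_and_add_pr_and_not (A B : Ω → Prop) :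
    pr P A = pr P (fun ω => A ω ∧ B ω) + pr P (fun ω => A ω ∧ ¬ B ω) := by
  unfold pr
  rw [← Finset.sum_add_distrib]
  exact Finset.sum_congr rfl fun ω _ => by by_cases h : A ω <;> by_cases h' : B ω <;> simp [h, h']

lemma pr_eq_bernoulliMass (hP : IsPMF P) {N : Ω → Bool} {a : ℝ}
    (hN : pr P (fun ω => N ω = true) = a) (b : Bool) :
    pr P (fun ω => N ω = b) = bernoulliMass a b := by
  cases b
  · rw [bernoulliMass, if_neg Bool.false_ne_true, ← hN, ← pr_not P hP]
    exact pr_congr P fun ω => by simp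
  · exact hN

lemma pr_eq_sum_pr_and_eq {τ : Type} [Fintype τ] (A : Ω → Prop) (f : Ω → τ) :
    pr P A = ∑ t, pr P (fun ω => A ω ∧ f ω = t) := by
  unfold pr
  rw [Finset.sum_comm]
  exact Finset.sum_congr rfl fun ω _ => by by_cases h : A ω <;> simp [h]

lemma pr_comp_eq_sum {τ : Type} [Fintype τ] (f : Ω → τ) (C : τ → Prop) :
    pr P (fun ω => C (f ω)) = ∑ t, if C t then pr P (fun ω => f ω = t) else 0 := by
  rw [pr_eq_sum_pr_and_eq P _ f]
  refine Finset.sum_congr rfl fun t _ => ?_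
  by_cases h : C t
  · rw [if_pos h]
    exact pr_congr P fun ω => ⟨And.right, fun ht => ⟨ht ▸ h, ht⟩⟩
  · rw [if_neg h, ← pr_false P]
    exact pr_congr P fun ω => ⟨fun ⟨hC, ht⟩ => h (ht ▸ hC), False.elim⟩

lemma ent_comp_eq_massEnt {τ β : Type} [Fintype τ] [Fintype β] {f : Ω → τ} {μ : τ → ℝ}
    (hf : ∀ t, pr P (fun ω => f ω = t) = μ t) (g : τ → β) :
    ent P (fun ω => g (f ω)) = massEnt (mapMass μ g) := by
  refine Finset.sum_congr rfl fun b _ => congrArg nlog ?_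
  rw [pr_comp_eq_sum P f (fun t => g t = b)]
  simp only [mapMass, hf]

end Probability

lemma pr_eq_cellMass {Ω : Type} [Fintype Ω] (P : Ω → ℝ) (hP : IsPMF P)
    (X N₁ N₂ : Ω → Bool) (Y : Ω → Option Bool) (p q a : ℝ)
    (hX : ∀ b, pr P (fun ω => X ω = b) = 1/2)
    (hN₂ : pr P (fun ω => N₂ ω = true) = q)
    (hN₁ : pr P (fun ω => N₁ ω = true) = a)
    (hindep : ∀ (b b1 b2 : Bool),
      pr P (fun ω => X ω = b ∧ N₁ ω = b1 ∧ N₂ ω = b2)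
        = pr P (fun ω => X ω = b) * pr P (fun ω => N₁ ω = b1)
          * pr P (fun ω => N₂ ω = b2))
    (hstruct : ∀ ω, Y ω = some (X ω) ∨ Y ω = none)
    (hindE : ∀ (b b1 b2 : Bool),
      pr P (fun ω => Y ω = none ∧ X ω = b ∧ N₁ ω = b1 ∧ N₂ ω = b2)
        = p * pr P (fun ω => X ω = b ∧ N₁ ω = b1 ∧ N₂ ω = b2))
    (t : Cell) : pr P (fun ω => (Y ω, X ω, N₁ ω, N₂ ω) = t) = cellMass p q a t := by
  obtain ⟨y, b, b₁, b₂⟩ := t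
  have hjoint : pr P (fun ω => X ω = b ∧ N₁ ω = b₁ ∧ N₂ ω = b₂)
      = 1/2 * bernoulliMass a b₁ * bernoulliMass q b₂ := by
    rw [hindep, hX, pr_eq_bernoulliMass P hP hN₁, pr_eq_bernoulliMass P hP hN₂]
  rcases y with _ | y
  · rw [cellMass_mk, erasureMass, ← hjoint, ← hindE]
    exact pr_congr P fun ω => by simp
  by_cases hy : y = b
  · subst hy
    have hsplit := pr_eq_pr_and_add_pr_and_not P
      (fun ω => X ω = y ∧ N₁ ω = b₁ ∧ N₂ ω = b₂) (fun ω => Y ω = none)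
    have herased : pr P (fun ω => (X ω = y ∧ N₁ ω = b₁ ∧ N₂ ω = b₂) ∧ Y ω = none)
        = p * (1/2 * bernoulliMass a b₁ * bernoulliMass q b₂) := by
      rw [← hjoint, ← hindE]
      exact pr_congr P fun ω => by tauto
    have hkept : pr P (fun ω => (X ω = y ∧ N₁ ω = b₁ ∧ N₂ ω = b₂) ∧ ¬ Y ω = none)
        = pr P (fun ω => (Y ω, X ω, N₁ ω, N₂ ω) = (some y, y, b₁, b₂)) := by
      refine pr_congr P fun ω => ?_
      rcases hstruct ω with h | h <;> simp [h]
    rw [cellMass_mk, erasureMass, if_pos rfl]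
    linarith
  · rw [cellMass_mk, erasureMass, if_neg hy, zero_mul, ← pr_false P]
    refine pr_congr P fun ω => ?_
    rcases hstruct ω with h | h <;> simp [h]
    rintro rfl rfl
    exact absurd rfl hy

lemma nlog_zero : nlog 0 = 0 := by simp [nlog]

lemma nlog_mul (x y : ℝ) : nlog (x * y) = x * nlog y + y * nlog x := by
  unfold nlog
  rcases eq_or_ne x 0 with rfl | hx
  · simp
  rcases eq_or_ne y 0 with rfl | hy
  · simp
  rw [Real.logb, Real.logb, Real.logb, Real.log_mul hx hy]
  ring

lemma nlog_two_inv : nlog (2⁻¹ : ℝ) = 2⁻¹ := by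
  have h2 : Real.log 2 ≠ 0 := by positivity
  simp [nlog, Real.logb, Real.log_inv]
  field_simp

section CellEntropies

variable {p q a D : ℝ}

lemma massEnt_W₁ :
    massEnt (mapMass (cellMass p q a) Cell.w₁) = 1 := by
  have mass : ∀ w, mapMass (cellMass p q a) Cell.w₁ w = 1/2 := by
    intro w
    cases w <;> simp [mapMass, Fintype.sum_prod_type, erasureMass, bernoulliMass,
      -mul_eq_mul_left_iff, -mul_eq_mul_right_iff] <;> ring
  simp [massEnt, mass, nlog_two_inv]

lemma massEnt_XW₁ (hD : q * (1 - a) + a * (1 - q) = D) :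
    massEnt (mapMass (cellMass p q a) fun t => (t.x, t.w₁)) = 1 + binEnt D := by
  have mass : ∀ b w, mapMass (cellMass p q a) (fun t => (t.x, t.w₁)) (b, w)
      = 1/2 * bernoulliMass D (xor b w) := by
    subst hD
    intro b w
    cases b <;> cases w <;> simp [mapMass, Fintype.sum_prod_type, erasureMass, bernoulliMass,
      -mul_eq_mul_left_iff, -mul_eq_mul_right_iff] <;> ring
  simp only [massEnt, Fintype.sum_prod_type, Fintype.sum_bool, mass]
  simp [bernoulliMass, nlog_mul, nlog_two_inv, binEnt]
  ring

lemma massEnt_YW₁ (hD : q * (1 - a) + a * (1 - q) = D) :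
    massEnt (mapMass (cellMass p q a) fun t => (t.y, t.w₁))
      = 1 + binEnt p + (1 - p) * binEnt D := by
  have mass : ∀ y w, mapMass (cellMass p q a) (fun t => (t.y, t.w₁)) (y, w)
      = y.elim (p * (1/2)) fun b => (1 - p) * (1/2 * bernoulliMass D (xor b w)) := by
    subst hD
    intro y w
    rcases y with _ | y <;> [skip; cases y] <;> cases w <;>
      simp [mapMass, Fintype.sum_prod_type, erasureMass, bernoulliMass, -mul_eq_mul_left_iff,
        -mul_eq_mul_right_iff] <;> ring
  simp only [massEnt, Fintype.sum_prod_type, Fintype.sum_option, Fintype.sum_bool, mass]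
  simp [bernoulliMass, nlog_mul, nlog_two_inv, binEnt]
  ring

lemma massEnt_XYW₁ (hD : q * (1 - a) + a * (1 - q) = D) :
    massEnt (mapMass (cellMass p q a) fun t => (t.x, t.y, t.w₁))
      = 1 + binEnt p + binEnt D := by
  have mass : ∀ b y w, mapMass (cellMass p q a) (fun t => (t.x, t.y, t.w₁)) (b, y, w)
      = erasureMass p b y * (1/2 * bernoulliMass D (xor b w)) := by
    subst hD
    intro b y w
    rcases y with _ | y <;> [skip; cases y] <;> cases b <;> cases w <;>
      simp [mapMass, Fintype.sum_prod_type, erasureMass, bernoulliMass, -mul_eq_mul_left_iff,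
        -mul_eq_mul_right_iff] <;> ring
  simp only [massEnt, Fintype.sum_prod_type, Fintype.sum_option, Fintype.sum_bool, mass]
  simp [erasureMass, bernoulliMass, nlog_mul, nlog_two_inv, nlog_zero, binEnt]
  ring

lemma massEnt_W₂YW₁ :
    massEnt (mapMass (cellMass p q a) fun t => (t.w₂, t.y, t.w₁))
      = 1 + binEnt p + binEnt a + (1 - p) * binEnt q := by
  have mass : ∀ w₂ y w₁, mapMass (cellMass p q a) (fun t => (t.w₂, t.y, t.w₁)) (w₂, y, w₁)
      = y.elim (p * (1/2 * bernoulliMass a (xor w₂ w₁))) fun b =>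
          (1 - p) * (1/2 * bernoulliMass q (xor b w₂) * bernoulliMass a (xor w₂ w₁)) := by
    intro w₂ y w₁
    rcases y with _ | y <;> [skip; cases y] <;> cases w₂ <;> cases w₁ <;>
      simp [mapMass, Fintype.sum_prod_type, erasureMass, bernoulliMass, -mul_eq_mul_left_iff,
        -mul_eq_mul_right_iff] <;> ring
  simp only [massEnt, Fintype.sum_prod_type, Fintype.sum_option, Fintype.sum_bool, mass]
  simp [bernoulliMass, nlog_mul, nlog_two_inv, binEnt]
  ring

lemma massEnt_XW₂YW₁ :
    massEnt (mapMass (cellMass p q a) fun t => (t.x, t.w₂, t.y, t.w₁))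
      = 1 + binEnt p + binEnt q + binEnt a := by
  have mass : ∀ b w₂ y w₁, mapMass (cellMass p q a) (fun t => (t.x, t.w₂, t.y, t.w₁))
      (b, w₂, y, w₁)
      = erasureMass p b y * (1/2 * bernoulliMass q (xor b w₂) * bernoulliMass a (xor w₂ w₁)) := by
    intro b w₂ y w₁
    rcases y with _ | y <;> [skip; cases y] <;> cases b <;> cases w₂ <;> cases w₁ <;>
      simp [mapMass, Fintype.sum_prod_type, erasureMass, bernoulliMass, -mul_eq_mul_left_iff,
        -mul_eq_mul_right_iff] <;> ring
  simp only [massEnt, Fintype.sum_prod_type, Fintype.sum_option, Fintype.sum_bool, mass]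
  simp [erasureMass, bernoulliMass, nlog_mul, nlog_two_inv, nlog_zero, binEnt]
  ring

end CellEntropies

theorem stmt11_general {Ω : Type} [Fintype Ω] (P : Ω → ℝ) (hP : IsPMF P)
    (X N₁ N₂ : Ω → Bool) (Y : Ω → Option Bool)
    (p D₁ D₂ α : ℝ) (hconv : (D₂/p) * (1 - α) + α * (1 - D₂/p) = D₁)
    (hX : ∀ b, pr P (fun ω => X ω = b) = 1/2)
    (hN2 : pr P (fun ω => N₂ ω = true) = D₂ / p)
    (hN1 : pr P (fun ω => N₁ ω = true) = α)
    (hindep : ∀ (b b1 b2 : Bool),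
      pr P (fun ω => X ω = b ∧ N₁ ω = b1 ∧ N₂ ω = b2)
        = pr P (fun ω => X ω = b) * pr P (fun ω => N₁ ω = b1)
          * pr P (fun ω => N₂ ω = b2))
    (hstruct : ∀ ω, Y ω = some (X ω) ∨ Y ω = none)
    (hindE : ∀ (b b1 b2 : Bool),
      pr P (fun ω => Y ω = none ∧ X ω = b ∧ N₁ ω = b1 ∧ N₂ ω = b2)
        = p * pr P (fun ω => X ω = b ∧ N₁ ω = b1 ∧ N₂ ω = b2)) :
    mi P X (fun ω => Bool.xor (Bool.xor (X ω) (N₂ ω)) (N₁ ω))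
      + condMI P X (fun ω => Bool.xor (X ω) (N₂ ω))
          (fun ω => (Y ω, Bool.xor (Bool.xor (X ω) (N₂ ω)) (N₁ ω)))
      = p * (1 - binEnt (D₂/p)) + (1 - p) * (1 - binEnt D₁)
    ∧ condEnt P Y (fun ω => Bool.xor (Bool.xor (X ω) (N₂ ω)) (N₁ ω))
      = binEnt p + (1 - p) * binEnt D₁ := by
  have hcell := pr_eq_cellMass P hP X N₁ N₂ Y p (D₂ / p) α hX hN2 hN1 hindep hstruct hindE
  have hentX : ent P X = 1 := by simp [ent, hX, nlog_two_inv]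
  have hW₁ : ent P (fun ω => xor (xor (X ω) (N₂ ω)) (N₁ ω)) = 1 :=
    (ent_comp_eq_massEnt P hcell Cell.w₁).trans massEnt_W₁
  have hXW₁ : ent P (fun ω => (X ω, xor (xor (X ω) (N₂ ω)) (N₁ ω))) = 1 + binEnt D₁ :=
    (ent_comp_eq_massEnt P hcell fun t => (t.x, t.w₁)).trans (massEnt_XW₁ hconv)
  have hYW₁ : ent P (fun ω => (Y ω, xor (xor (X ω) (N₂ ω)) (N₁ ω)))
      = 1 + binEnt p + (1 - p) * binEnt D₁ :=
    (ent_comp_eq_massEnt P hcell fun t => (t.y, t.w₁)).trans (massEnt_YW₁ hconv)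
  have hXYW₁ : ent P (fun ω => (X ω, Y ω, xor (xor (X ω) (N₂ ω)) (N₁ ω)))
      = 1 + binEnt p + binEnt D₁ :=
    (ent_comp_eq_massEnt P hcell fun t => (t.x, t.y, t.w₁)).trans (massEnt_XYW₁ hconv)
  have hW₂YW₁ : ent P (fun ω => (xor (X ω) (N₂ ω), Y ω, xor (xor (X ω) (N₂ ω)) (N₁ ω)))
      = 1 + binEnt p + binEnt α + (1 - p) * binEnt (D₂ / p) :=
    (ent_comp_eq_massEnt P hcell fun t => (t.w₂, t.y, t.w₁)).trans massEnt_W₂YW₁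
  have hXW₂YW₁ : ent P (fun ω => (X ω, xor (X ω) (N₂ ω), Y ω, xor (xor (X ω) (N₂ ω)) (N₁ ω)))
      = 1 + binEnt p + binEnt (D₂ / p) + binEnt α :=
    (ent_comp_eq_massEnt P hcell fun t => (t.x, t.w₂, t.y, t.w₁)).trans massEnt_XW₂YW₁
  simp only [mi, condMI, condEnt]
  rw [hentX, hW₁, hXW₁, hYW₁, hXYW₁, hW₂YW₁, hXW₂YW₁]
  constructor <;> ring

/-- Achievability computation for regime L₄: with `X` uniform, `Y` its erasure
(probability `p`), `N₂ ~ Ber(D₂/p)`, `N₁ ~ Ber(α)` independent of each other and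
of `(X,Y)`, `W₂ = X ⊕ N₂`, `W₁ = W₂ ⊕ N₁`, and `(D₂/p) ⋆ α = D₁`:
`I(X;W₁) + I(X;W₂|Y,W₁) = p(1 - h(D₂/p)) + (1-p)(1 - h(D₁))` and
`H(Y|W₁) = h(p) + (1-p)h(D₁)`. -/
theorem stmt11 {Ω : Type} [Fintype Ω] (P : Ω → ℝ) (hP : IsPMF P)
    (X N₁ N₂ : Ω → Bool) (Y : Ω → Option Bool)
    (p D₁ D₂ α : ℝ) (hp : 0 < p) (hp1 : p < 1)
    (hD20 : 0 ≤ D₂) (hqh : D₂ / p ≤ 1/2) (hα0 : 0 ≤ α) (hαh : α ≤ 1/2)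
    (hconv : (D₂/p) * (1 - α) + α * (1 - D₂/p) = D₁)
    (hX : ∀ b, pr P (fun ω => X ω = b) = 1/2)
    (hN2 : pr P (fun ω => N₂ ω = true) = D₂ / p)
    (hN1 : pr P (fun ω => N₁ ω = true) = α)
    (hindep : ∀ (b b1 b2 : Bool),
      pr P (fun ω => X ω = b ∧ N₁ ω = b1 ∧ N₂ ω = b2)
        = pr P (fun ω => X ω = b) * pr P (fun ω => N₁ ω = b1)
          * pr P (fun ω => N₂ ω = b2))
    (hstruct : ∀ ω, Y ω = some (X ω) ∨ Y ω = none)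
    (hindE : ∀ (b b1 b2 : Bool),
      pr P (fun ω => Y ω = none ∧ X ω = b ∧ N₁ ω = b1 ∧ N₂ ω = b2)
        = p * pr P (fun ω => X ω = b ∧ N₁ ω = b1 ∧ N₂ ω = b2)) :
    mi P X (fun ω => Bool.xor (Bool.xor (X ω) (N₂ ω)) (N₁ ω))
      + condMI P X (fun ω => Bool.xor (X ω) (N₂ ω))
          (fun ω => (Y ω, Bool.xor (Bool.xor (X ω) (N₂ ω)) (N₁ ω)))
      = p * (1 - binEnt (D₂/p)) + (1 - p) * (1 - binEnt D₁)
    ∧ condEnt P Y (fun ω => Bool.xor (Bool.xor (X ω) (N₂ ω)) (N₁ ω))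
      = binEnt p + (1 - p) * binEnt D₁ :=
  stmt11_general P hP X N₁ N₂ Y p D₁ D₂ α hconv hX hN2 hN1 hindep hstruct hindE
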